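/- Let (Y,d,μ) be an Ahlfors-regular probability metric measure space with a Lipschitz action of Γ = ⟨S⟩ that has a spectral gap in L²(Y,μ;X) with constant κ, i.e., Σ_{s∈S}∫_Y‖f(u)−f(su)‖²du ≥ κ∫∫_{Y²}‖f(u)−f(v)‖²du dv for all f ∈ L²(Y,μ;X). Fix t ≥ 1/diam Y, a (1/t)-separated set Z with partition {U_z} as above, and the graph G(t) on vertex set Z with edges z∼y iff (∃s∈S: U_y∩sU_z≠∅) or d(y,z) ≤ 3/t. Then for every f : Z → X, #S·Σ_{z∼y}‖f(z)−f(y)‖² ≥ (κ/(K³·#Z))·Σ_{z,y∈Z}‖f(z)−f(y)‖², where K = C·2ᵐ. -/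

import Mathlib

/-! Extend `f` to the step function `g = f ∘ idx`, constant on each cell `U z`. Its double
integral `∑ μ(U z) μ(U y) ‖f z - f y‖²` is at least `(K·#Z)⁻²` times the full sum, while
`∫ ‖g u - g (s • u)‖²` only charges pairs with `U z ∩ s⁻¹ U y ≠ ∅`, which are edges of the
graph, each with weight at most `μ(U z) ≤ K / #Z`; the spectral gap inequality for `g` links the
two. Both cell bounds come from Ahlfors regularity: `μ(U z)` lies between `a = c (1/(2t))^m` and
`C 2^m a`, and the cells have total mass one. -/

open MeasureTheory

attribute [local instance] Classical.propDecidable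

lemma preimage_singleton_eq_of_existsUnique {Y ι : Type*} {Z : Finset ι} {U : ι → Set Y}
    (hpart : ∀ u, ∃! z, z ∈ Z ∧ u ∈ U z) {idx : Y → ι} (hidx : ∀ u, idx u ∈ Z ∧ u ∈ U (idx u))
    {z : ι} (hz : z ∈ Z) : idx ⁻¹' {z} = U z := by
  ext u
  constructor
  · rintro rfl
    exact (hidx u).2
  · exact fun hu => (hpart u).unique (hidx u) ⟨hz, hu⟩

section StepFunction

variable {Y ι E : Type*} {Z : Finset ι} {idx : Y → ι}

lemma comp_eq_sum_indicator_fiber [AddCommMonoid E] (hidx : ∀ u, idx u ∈ Z) (ρ : ι → E) :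
    (fun u => ρ (idx u)) = fun u => ∑ z ∈ Z, (idx ⁻¹' {z}).indicator (fun _ => ρ z) u := by
  ext u
  rw [Finset.sum_eq_single_of_mem (idx u) (hidx u)]
  · simp
  · intro z _ hz
    exact Set.indicator_of_notMem (Ne.symm hz) _

variable [MeasurableSpace Y] {μ : Measure Y} [IsFiniteMeasure μ]

lemma memLp_comp_of_measurableSet_fiber [NormedAddCommGroup E] (hidx : ∀ u, idx u ∈ Z)
    (hmeas : ∀ z ∈ Z, MeasurableSet (idx ⁻¹' {z})) (ρ : ι → E) (p : ENNReal) :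
    MemLp (fun u => ρ (idx u)) p μ := by
  rw [comp_eq_sum_indicator_fiber hidx]
  exact memLp_finsetSum _ fun z hz =>
    memLp_indicator_const p (hmeas z hz) (ρ z) (Or.inr (measure_ne_top μ _))

lemma integral_comp_eq_sum_measureReal_fiber [NormedAddCommGroup E] [NormedSpace ℝ E]
    [CompleteSpace E] (hidx : ∀ u, idx u ∈ Z) (hmeas : ∀ z ∈ Z, MeasurableSet (idx ⁻¹' {z}))
    (ρ : ι → E) :
    ∫ u, ρ (idx u) ∂μ = ∑ z ∈ Z, μ.real (idx ⁻¹' {z}) • ρ z := by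
  rw [comp_eq_sum_indicator_fiber hidx, integral_finsetSum _ fun z hz =>
    (memLp_indicator_const 1 (hmeas z hz) (ρ z) (Or.inr (measure_ne_top μ _))).integrable le_rfl]
  exact Finset.sum_congr rfl fun z hz => integral_indicator_const _ (hmeas z hz)

lemma sum_measureReal_fiber_eq_one [IsProbabilityMeasure μ] (hidx : ∀ u, idx u ∈ Z)
    (hmeas : ∀ z ∈ Z, MeasurableSet (idx ⁻¹' {z})) :
    ∑ z ∈ Z, μ.real (idx ⁻¹' {z}) = 1 := by
  simpa using (integral_comp_eq_sum_measureReal_fiber (μ := μ) hidx hmeas fun _ => (1 : ℝ)).symm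

lemma integral_integral_comp_eq_sum (hidx : ∀ u, idx u ∈ Z)
    (hmeas : ∀ z ∈ Z, MeasurableSet (idx ⁻¹' {z})) (ρ : ι → ι → ℝ) :
    ∫ u, ∫ v, ρ (idx u) (idx v) ∂μ ∂μ =
      ∑ z ∈ Z, ∑ y ∈ Z, μ.real (idx ⁻¹' {z}) * μ.real (idx ⁻¹' {y}) * ρ z y := by
  simp only [integral_comp_eq_sum_measureReal_fiber hidx hmeas (ρ (idx _)), smul_eq_mul]
  rw [integral_comp_eq_sum_measureReal_fiber hidx hmeas
    fun z => ∑ y ∈ Z, μ.real (idx ⁻¹' {y}) * ρ z y]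
  simp only [smul_eq_mul, Finset.mul_sum, mul_assoc]

lemma integral_comp_map_eq_sum {φ : Y → Y} (hφ : Measurable φ) (hidx : ∀ u, idx u ∈ Z)
    (hmeas : ∀ z ∈ Z, MeasurableSet (idx ⁻¹' {z})) (ρ : ι → ι → ℝ) :
    ∫ u, ρ (idx u) (idx (φ u)) ∂μ =
      ∑ z ∈ Z, ∑ y ∈ Z, μ.real (idx ⁻¹' {z} ∩ φ ⁻¹' (idx ⁻¹' {y})) * ρ z y := by
  have hfiber : ∀ p : ι × ι, (fun u => (idx u, idx (φ u))) ⁻¹' {p} =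
      idx ⁻¹' {p.1} ∩ φ ⁻¹' (idx ⁻¹' {p.2}) := fun p => by
    ext u; simp [Prod.ext_iff]
  have := integral_comp_eq_sum_measureReal_fiber (μ := μ) (Z := Z ×ˢ Z)
    (idx := fun u => (idx u, idx (φ u))) (fun u => Finset.mem_product.2 ⟨hidx u, hidx (φ u)⟩)
    (fun p hp => hfiber p ▸ (hmeas _ (Finset.mem_product.1 hp).1).inter
      (hφ (hmeas _ (Finset.mem_product.1 hp).2))) (fun p => ρ p.1 p.2)
  simpa only [hfiber, Finset.sum_product, smul_eq_mul] using this

lemma mul_sum_sum_le_integral_integral_comp (hidx : ∀ u, idx u ∈ Z)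
    (hmeas : ∀ z ∈ Z, MeasurableSet (idx ⁻¹' {z})) {a : ℝ} (ha : 0 ≤ a)
    (hμ : ∀ z ∈ Z, a ≤ μ.real (idx ⁻¹' {z})) {ρ : ι → ι → ℝ} (hρ : ∀ z y, 0 ≤ ρ z y) :
    a * a * ∑ z ∈ Z, ∑ y ∈ Z, ρ z y ≤ ∫ u, ∫ v, ρ (idx u) (idx v) ∂μ ∂μ := by
  rw [integral_integral_comp_eq_sum hidx hmeas]
  simp only [Finset.mul_sum]
  gcongr with z hz y hy
  · exact hρ z y
  · exact hμ z hz
  · exact hμ y hy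

lemma integral_comp_map_le_sum_adj {φ : Y → Y} (hφ : Measurable φ) (hidx : ∀ u, idx u ∈ Z)
    (hmeas : ∀ z ∈ Z, MeasurableSet (idx ⁻¹' {z})) {B : ℝ}
    (hμ : ∀ z ∈ Z, μ.real (idx ⁻¹' {z}) ≤ B) {ρ : ι → ι → ℝ} (hρ : ∀ z y, 0 ≤ ρ z y)
    {adj : ι → ι → Prop} [DecidableRel adj] (hadj : ∀ u, adj (idx u) (idx (φ u))) :
    ∫ u, ρ (idx u) (idx (φ u)) ∂μ ≤
      B * ∑ z ∈ Z, ∑ y ∈ Z, if adj z y then ρ z y else 0 := by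
  rw [integral_comp_map_eq_sum hφ hidx hmeas]
  simp only [Finset.mul_sum]
  refine Finset.sum_le_sum fun z hz => Finset.sum_le_sum fun y _ => ?_
  split_ifs with h
  · gcongr
    · exact hρ z y
    · exact (measureReal_mono Set.inter_subset_left).trans (hμ z hz)
  · have hempty : idx ⁻¹' {z} ∩ φ ⁻¹' (idx ⁻¹' {y}) = ∅ := by
      ext u
      simp only [Set.mem_inter_iff, Set.mem_preimage, Set.mem_singleton_iff,
        Set.mem_empty_iff_false, iff_false, not_and]
      rintro rfl rfl
      exact h (hadj u)
    simp [hempty]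

end StepFunction

lemma mem_Icc_of_sum_eq_one {ι : Type*} {Z : Finset ι} {x : ι → ℝ}
    (hsum : ∑ z ∈ Z, x z = 1) {a K : ℝ} (hK : 0 < K)
    (hx : ∀ z ∈ Z, a ≤ x z ∧ x z ≤ K * a) {z : ι} (hz : z ∈ Z) :
    x z ∈ Set.Icc (1 / (K * Z.card)) (K / Z.card) := by
  have hn : (0 : ℝ) < Z.card := by exact_mod_cast Finset.card_pos.2 ⟨z, hz⟩
  have hlow : Z.card * a ≤ 1 := by
    calc Z.card * a = ∑ _z ∈ Z, a := by rw [Finset.sum_const, nsmul_eq_mul]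
      _ ≤ ∑ z ∈ Z, x z := Finset.sum_le_sum fun z hz => (hx z hz).1
      _ = 1 := hsum
  have hup : 1 ≤ Z.card * (K * a) := by
    calc 1 = ∑ z ∈ Z, x z := hsum.symm
      _ ≤ ∑ _z ∈ Z, K * a := Finset.sum_le_sum fun z hz => (hx z hz).2
      _ = Z.card * (K * a) := by rw [Finset.sum_const, nsmul_eq_mul]
  constructor
  · rw [div_le_iff₀ (by positivity)]
    nlinarith [mul_le_mul_of_nonneg_right (hx z hz).1 (by positivity : (0 : ℝ) ≤ K * Z.card)]
  · rw [le_div_iff₀ hn]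
    nlinarith [(hx z hz).2]

def IsAhlforsRegular {Y : Type*} [PseudoMetricSpace Y] [MeasurableSpace Y] (μ : Measure Y)
    (c m C : ℝ) : Prop :=
  ∀ (y : Y) (r : ℝ), 0 < r → r ≤ Metric.diam (Set.univ : Set Y) →
    ENNReal.ofReal (c * r ^ m) ≤ μ (Metric.ball y r) ∧
      μ (Metric.ball y r) ≤ ENNReal.ofReal (c * C * r ^ m)

lemma IsAhlforsRegular.measureReal_bounds {Y : Type*} [PseudoMetricSpace Y] [MeasurableSpace Y]
    {μ : Measure Y} [IsFiniteMeasure μ] {c m C : ℝ} (h : IsAhlforsRegular μ c m C)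
    (hc : 0 ≤ c) (hC : 0 ≤ C) {z : Y} {r : ℝ} (hr : 0 < r)
    (hrd : r ≤ Metric.diam (Set.univ : Set Y)) {V : Set Y}
    (hV : Metric.ball z (r / 2) ⊆ V ∧ V ⊆ Metric.ball z r) :
    c * (r / 2) ^ m ≤ μ.real V ∧ μ.real V ≤ C * 2 ^ m * (c * (r / 2) ^ m) := by
  constructor
  · refine (ENNReal.ofReal_le_iff_le_toReal (measure_ne_top μ _)).1 ?_
    exact (h z _ (half_pos hr) (by linarith)).1.trans (measure_mono hV.1)
  · have hscale : C * 2 ^ m * (c * (r / 2) ^ m) = c * C * r ^ m := by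
      rw [Real.div_rpow hr.le zero_le_two]
      field_simp
    rw [hscale]
    exact ENNReal.toReal_le_of_le_ofReal (by positivity)
      ((measure_mono hV.2).trans (h z r hr hrd).2)

theorem graph_poincare_of_spectralGap {Γ Y ι X : Type*} [Group Γ] [MeasurableSpace Y]
    [MulAction Γ Y] {μ : Measure Y} [IsProbabilityMeasure μ]
    [NormedAddCommGroup X] {S : Finset Γ} (hS : ∀ s ∈ S, Measurable (fun u : Y => s • u))
    {κ : ℝ} (hκ : 0 ≤ κ)
    (hgap : ∀ g : Y → X, MemLp g 2 μ →
      (∑ s ∈ S, ∫ u, ‖g u - g (s • u)‖ ^ 2 ∂μ) ≥ κ * ∫ u, ∫ v, ‖g u - g v‖ ^ 2 ∂μ ∂μ)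
    {Z : Finset ι} {idx : Y → ι} (hidx : ∀ u, idx u ∈ Z)
    (hmeas : ∀ z ∈ Z, MeasurableSet (idx ⁻¹' {z})) {K : ℝ} (hK : 0 < K)
    (hμ : ∀ z ∈ Z, μ.real (idx ⁻¹' {z}) ∈ Set.Icc (1 / (K * Z.card)) (K / Z.card))
    {adj : ι → ι → Prop} [DecidableRel adj] (hadj : ∀ s ∈ S, ∀ u, adj (idx u) (idx (s • u)))
    (f : ι → X) :
    κ / (K ^ 3 * Z.card) * ∑ z ∈ Z, ∑ y ∈ Z, ‖f z - f y‖ ^ 2 ≤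
      S.card * ∑ z ∈ Z, ∑ y ∈ Z, if adj z y then ‖f z - f y‖ ^ 2 else 0 := by
  obtain ⟨u₀⟩ := nonempty_of_isProbabilityMeasure μ
  have hn : (0 : ℝ) < Z.card := by exact_mod_cast Finset.card_pos.2 ⟨_, hidx u₀⟩
  set T := ∑ z ∈ Z, ∑ y ∈ Z, ‖f z - f y‖ ^ 2
  set E := ∑ z ∈ Z, ∑ y ∈ Z, if adj z y then ‖f z - f y‖ ^ 2 else 0
  have hlower : 1 / (K * Z.card) * (1 / (K * Z.card)) * T ≤
      ∫ u, ∫ v, ‖f (idx u) - f (idx v)‖ ^ 2 ∂μ ∂μ :=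
    mul_sum_sum_le_integral_integral_comp hidx hmeas (by positivity)
      (fun z hz => (hμ z hz).1) fun _ _ => by positivity
  have hupper : ∀ s ∈ S, ∫ u, ‖f (idx u) - f (idx (s • u))‖ ^ 2 ∂μ ≤ K / Z.card * E :=
    fun s hs => integral_comp_map_le_sum_adj (hS s hs) hidx hmeas (fun z hz => (hμ z hz).2)
      (ρ := fun z y => ‖f z - f y‖ ^ 2) (fun _ _ => by positivity) (hadj s hs)
  calc κ / (K ^ 3 * Z.card) * T
      = Z.card / K * (κ * (1 / (K * Z.card) * (1 / (K * Z.card)) * T)) := by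
        field_simp
    _ ≤ Z.card / K * (κ * ∫ u, ∫ v, ‖f (idx u) - f (idx v)‖ ^ 2 ∂μ ∂μ) := by gcongr
    _ ≤ Z.card / K * ∑ s ∈ S, ∫ u, ‖f (idx u) - f (idx (s • u))‖ ^ 2 ∂μ := by
        gcongr
        exact hgap _ (memLp_comp_of_measurableSet_fiber hidx hmeas f 2)
    _ ≤ Z.card / K * ∑ _s ∈ S, K / Z.card * E := by gcongr with s hs; exact hupper s hs
    _ = S.card * E := by
        rw [Finset.sum_const, nsmul_eq_mul]
        field_simp

lemma subsingleton_or_one_div_le_diam_univ {Y : Type*} [MetricSpace Y]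
    (hbdd : Bornology.IsBounded (Set.univ : Set Y)) {t : ℝ} (ht : 0 < t)
    (ht' : 1 / Metric.diam (Set.univ : Set Y) ≤ t) :
    Subsingleton Y ∨ 1 / t ≤ Metric.diam (Set.univ : Set Y) := by
  rcases (Metric.diam_nonneg (s := (Set.univ : Set Y))).eq_or_lt with hdiam | hdiam
  · exact Or.inl ⟨fun z y => dist_le_zero.1
      ((Metric.dist_le_diam_of_mem hbdd (Set.mem_univ z) (Set.mem_univ y)).trans hdiam.ge)⟩
  · exact Or.inr ((one_div_le hdiam ht).1 ht')

theorem stmt13_general {Γ Y X : Type*} [Group Γ] [MetricSpace Y] [MeasurableSpace Y]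
    [MulAction Γ Y]
    (μ : Measure Y) [IsProbabilityMeasure μ]
    [NormedAddCommGroup X]
    (c m C : ℝ) (hc : 0 < c) (hC : 1 ≤ C)
    (hAhlfors : ∀ (y : Y) (r : ℝ), 0 < r → r ≤ Metric.diam (Set.univ : Set Y) →
      ENNReal.ofReal (c * r ^ m) ≤ μ (Metric.ball y r) ∧
        μ (Metric.ball y r) ≤ ENNReal.ofReal (c * C * r ^ m))
    (S : Finset Γ)
    (hmp : ∀ s ∈ S, MeasurePreserving (fun y : Y => s • y) μ μ)
    (κ : ℝ) (hκ : 0 < κ)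
    (hgap : ∀ f : Y → X, MemLp f 2 μ →
      (∑ s ∈ S, ∫ u, ‖f u - f (s • u)‖ ^ 2 ∂μ)
        ≥ κ * ∫ u, ∫ v, ‖f u - f v‖ ^ 2 ∂μ ∂μ)
    (t : ℝ) (ht : 0 < t) (ht' : 1 / Metric.diam (Set.univ : Set Y) ≤ t)
    (Z : Finset Y)
    (U : Y → Set Y) (hmeas : ∀ z ∈ Z, MeasurableSet (U z))
    (hpart : ∀ u : Y, ∃! z, z ∈ Z ∧ u ∈ U z)
    (hU : ∀ z ∈ Z, Metric.ball z (1 / (2 * t)) ⊆ U z ∧ U z ⊆ Metric.ball z (1 / t))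
    (f : Y → X) :
    (S.card : ℝ) *
        (∑ z ∈ Z, ∑ y ∈ Z,
          if (∃ s ∈ S, (U y ∩ (fun u => s • u) '' U z).Nonempty) ∨ dist y z ≤ 3 / t
            then ‖f z - f y‖ ^ 2 else 0)
      ≥ (κ / ((C * 2 ^ m) ^ 3 * Z.card)) * ∑ z ∈ Z, ∑ y ∈ Z, ‖f z - f y‖ ^ 2 := by
  choose idx hidx using fun u => (hpart u).exists
  have hfiber : ∀ z ∈ Z, idx ⁻¹' {z} = U z :=
    fun z hz => preimage_singleton_eq_of_existsUnique hpart hidx hz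
  have hmeas' : ∀ z ∈ Z, MeasurableSet (idx ⁻¹' {z}) := fun z hz => hfiber z hz ▸ hmeas z hz
  have hbdd : Bornology.IsBounded (Set.univ : Set Y) :=
    ((Bornology.isBounded_biUnion_finset Z).2 fun z hz =>
      Metric.isBounded_ball.subset (hU z hz).2).subset
        fun u _ => Set.mem_biUnion (hidx u).1 (hidx u).2
  rcases subsingleton_or_one_div_le_diam_univ hbdd ht ht' with hY | hrd
  · have hzero : ∑ z ∈ Z, ∑ y ∈ Z, ‖f z - f y‖ ^ 2 = 0 :=
      Finset.sum_eq_zero fun z _ => Finset.sum_eq_zero fun y _ => by simp [Subsingleton.elim z y]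
    rw [hzero, mul_zero]
    exact mul_nonneg (Nat.cast_nonneg _)
      (Finset.sum_nonneg fun _ _ => Finset.sum_nonneg fun _ _ => by split_ifs <;> positivity)
  have hK : 0 < C * 2 ^ m := by positivity
  have hcell : ∀ z ∈ Z,
      μ.real (idx ⁻¹' {z}) ∈ Set.Icc (1 / (C * 2 ^ m * Z.card)) (C * 2 ^ m / Z.card) :=
    fun z hz => mem_Icc_of_sum_eq_one (sum_measureReal_fiber_eq_one (fun u => (hidx u).1) hmeas')
      (a := c * (1 / t / 2) ^ m) hK (fun y hy => hfiber y hy ▸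
        IsAhlforsRegular.measureReal_bounds hAhlfors hc.le (by linarith) (one_div_pos.2 ht) hrd
          (by rw [show 1 / t / 2 = 1 / (2 * t) by ring]; exact hU y hy)) hz
  exact graph_poincare_of_spectralGap (fun s hs => (hmp s hs).measurable) hκ.le hgap
    (fun u => (hidx u).1) hmeas' hK hcell
    (adj := fun z y => (∃ s ∈ S, (U y ∩ (fun u => s • u) '' U z).Nonempty) ∨ dist y z ≤ 3 / t)
    (fun s hs u => Or.inl ⟨s, hs, s • u, (hidx (s • u)).2, u, (hidx u).2, rfl⟩) f

/-- Spectral gap implies expansion at a fixed level `t`: under Ahlfors regularity and a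
measure-preserving action of `Γ = ⟨S⟩` with spectral gap `κ` in `L²(Y,μ;X)`, the graph
`G(t)` on a `(1/t)`-separated set `Z` (with edges given by `∃ s ∈ S, U_y ∩ sU_z ≠ ∅` or
`d(y,z) ≤ 3/t`) satisfies the Poincaré inequality
`#S·Σ_{z∼y}‖f(z)-f(y)‖² ≥ (κ/(K³·#Z))·Σ_{z,y}‖f(z)-f(y)‖²` with `K = C·2^m`. -/
theorem stmt13 {Γ Y X : Type*} [Group Γ] [MetricSpace Y] [MeasurableSpace Y]
    [MulAction Γ Y]
    (μ : Measure Y) [IsProbabilityMeasure μ]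
    [NormedAddCommGroup X] [NormedSpace ℝ X] [CompleteSpace X]
    (c m C : ℝ) (hc : 0 < c) (hm : 0 < m) (hC : 1 ≤ C)
    (hAhlfors : ∀ (y : Y) (r : ℝ), 0 < r → r ≤ Metric.diam (Set.univ : Set Y) →
      ENNReal.ofReal (c * r ^ m) ≤ μ (Metric.ball y r) ∧
        μ (Metric.ball y r) ≤ ENNReal.ofReal (c * C * r ^ m))
    (S : Finset Γ) (hSsymm : ∀ s ∈ S, s⁻¹ ∈ S)
    (hmp : ∀ s ∈ S, MeasurePreserving (fun y : Y => s • y) μ μ)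
    (κ : ℝ) (hκ : 0 < κ)
    (hgap : ∀ f : Y → X, MemLp f 2 μ →
      (∑ s ∈ S, ∫ u, ‖f u - f (s • u)‖ ^ 2 ∂μ)
        ≥ κ * ∫ u, ∫ v, ‖f u - f v‖ ^ 2 ∂μ ∂μ)
    (t : ℝ) (ht : 0 < t) (ht' : 1 / Metric.diam (Set.univ : Set Y) ≤ t)
    (Z : Finset Y)
    (hsep : ∀ x ∈ Z, ∀ y ∈ Z, x ≠ y → 1 / t < dist x y)
    (U : Y → Set Y) (hmeas : ∀ z ∈ Z, MeasurableSet (U z))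
    (hpart : ∀ u : Y, ∃! z, z ∈ Z ∧ u ∈ U z)
    (hU : ∀ z ∈ Z, Metric.ball z (1 / (2 * t)) ⊆ U z ∧ U z ⊆ Metric.ball z (1 / t))
    (f : Y → X) :
    (S.card : ℝ) *
        (∑ z ∈ Z, ∑ y ∈ Z,
          if (∃ s ∈ S, (U y ∩ (fun u => s • u) '' U z).Nonempty) ∨ dist y z ≤ 3 / t
            then ‖f z - f y‖ ^ 2 else 0)
      ≥ (κ / ((C * 2 ^ m) ^ 3 * Z.card)) * ∑ z ∈ Z, ∑ y ∈ Z, ‖f z - f y‖ ^ 2 :=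
  stmt13_general μ c m C hc hC hAhlfors S hmp κ hκ hgap t ht ht' Z U hmeas hpart hU f
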